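/- If D̂ = D*PS where D* and D̂ have unit-norm columns, P is a permutation matrix, S is an invertible diagonal matrix, and additionally Ŷ = S⁻¹PᵀY* where all entries of Y* and Ŷ are nonnegative and every row of Y* has at least one strictly positive entry, then all diagonal entries of S equal +1, i.e., S is the identity. -/
import Mathlib

/-- If `D̂ = D* P S` with unit-norm columns, `Ŷ = S⁻¹ Pᵀ Y*`, all entries of `Y*`
and `Ŷ` are nonnegative, and every row of `Y*` has a strictly positive entry, then
`S` is the identity. -/
theorem scale_matrix_is_identity
    (d K N : ℕ)
    (Dstar Dhat : Matrix (Fin d) (Fin K) ℝ)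
    (Ystar Yhat : Matrix (Fin K) (Fin N) ℝ)
    (hstar : ∀ j : Fin K, Real.sqrt (∑ i, (Dstar i j) ^ 2) = 1)
    (hhat : ∀ j : Fin K, Real.sqrt (∑ i, (Dhat i j) ^ 2) = 1)
    (σ : Equiv.Perm (Fin K)) (s : Fin K → ℝ) (hs : ∀ j, s j ≠ 0)
    (hD : Dhat = Dstar * σ.permMatrix ℝ * Matrix.diagonal s)
    (hY : Yhat = Matrix.diagonal (fun j => (s j)⁻¹) * (σ.permMatrix ℝ).transpose * Ystar)
    (hYstar_nonneg : ∀ j i, 0 ≤ Ystar j i)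
    (hYhat_nonneg : ∀ j i, 0 ≤ Yhat j i)
    (hrow : ∀ j : Fin K, ∃ i : Fin N, 0 < Ystar j i) :
    Matrix.diagonal s = (1 : Matrix (Fin K) (Fin K) ℝ) := by
  have hDhat : ∀ i j, Dhat i j = Dstar i (σ.symm j) * s j := by
    intro i j
    rw [hD, Matrix.mul_diagonal, Equiv.Perm.permMatrix, PEquiv.mul_toMatrix_toPEquiv,
      Matrix.submatrix_apply]
    rfl
  have hPt : (σ.permMatrix ℝ).transpose = σ.symm.toPEquiv.toMatrix := by
    rw [Equiv.Perm.permMatrix, ← PEquiv.toMatrix_symm, Equiv.toPEquiv_symm]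
  have hYhat : ∀ j i, Yhat j i = (s j)⁻¹ * Ystar (σ.symm j) i := by
    intro j i
    rw [hY, Matrix.mul_assoc, Matrix.diagonal_mul, hPt, PEquiv.toMatrix_toPEquiv_mul,
      Matrix.submatrix_apply]
    rfl
  -- |s j| = 1
  have habs : ∀ j, |s j| = 1 := by
    intro j
    have h1 : ∑ i, (Dstar i (σ.symm j)) ^ 2 = 1 := by
      have := hstar (σ.symm j)
      have hnn : 0 ≤ ∑ i, (Dstar i (σ.symm j)) ^ 2 :=
        Finset.sum_nonneg fun i _ => sq_nonneg _
      nlinarith [Real.sq_sqrt hnn]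
    have h2 : ∑ i, (Dhat i j) ^ 2 = (s j) ^ 2 := by
      simp only [hDhat, mul_pow, ← Finset.sum_mul, h1, one_mul]
    have := hhat j
    rw [h2, Real.sqrt_sq_eq_abs] at this
    exact this
  -- s j > 0
  have hpos : ∀ j, 0 < s j := by
    intro j
    obtain ⟨i, hi⟩ := hrow (σ.symm j)
    have h := hYhat_nonneg j i
    rw [hYhat j i, mul_comm] at h
    have hinv : 0 ≤ (s j)⁻¹ := nonneg_of_mul_nonneg_right h hi
    rcases (inv_nonneg.mp hinv).lt_or_eq with hlt | heq
    · exact hlt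
    · exact absurd heq.symm (hs j)
  have hone : ∀ j, s j = 1 := fun j => by
    have := habs j
    rwa [abs_of_pos (hpos j)] at this
  funext i j
  simp [Matrix.diagonal, Matrix.one_apply, hone]
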